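/- The pairing ⟨Z(α₁,...,α_n), X_{β₁}⋯X_{β_m}⟩ = δ_{m,n} ∏_i δ_{α_i,β_i} between the quasi-shuffle bialgebra QSym_M on words in nonzero elements of M and the free algebra NC_M on generators X_α (with Δ(X_γ) = ∑_{α+β=γ} X_α ⊗ X_β) satisfies ⟨a ⊗ b, Δ(v)⟩ = ⟨ab, v⟩ for all a, b ∈ QSym_M and v ∈ NC_M. -/

import Mathlib

set_option linter.unusedSectionVars false

namespace QSym

class AddZeroFree (M : Type) [AddCommMonoid M] : Prop where
  add_ne : ∀ a b : M, a ≠ 0 → b ≠ 0 → a + b ≠ 0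

variable {M : Type} [AddCommMonoid M] [AddZeroFree M]

/-- A word in the nonzero elements of `M`: a basis element `Z(α₁,…,α_k)` of `QSym_M`. -/
abbrev Word (M : Type) [AddCommMonoid M] := List {a : M // a ≠ 0}

/-- `QSym_M`: the span of the words `Z(α₁,…,α_k)`. -/
abbrev QS (M : Type) [AddCommMonoid M] := Word M →₀ ℚ

/-- The quasi-shuffle product on basis words. -/
noncomputable def qsh : Word M → Word M → QS M
  | [], w => Finsupp.single w 1
  | v@(_ :: _), [] => Finsupp.single v 1
  | a :: as, b :: bs =>
      Finsupp.mapDomain (a :: ·) (qsh as (b :: bs))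
        + Finsupp.mapDomain (b :: ·) (qsh (a :: as) bs)
        + Finsupp.mapDomain
            ((⟨a.1 + b.1, AddZeroFree.add_ne a.1 b.1 a.2 b.2⟩ : {x : M // x ≠ 0}) :: ·)
            (qsh as bs)
  termination_by v w => v.length + w.length

/-- The quasi-shuffle product, extended bilinearly. -/
noncomputable def qmul (f g : QS M) : QS M :=
  Finsupp.sum f fun v c => Finsupp.sum g fun w d => (c * d) • qsh v w

/-- `NC_M`: the free associative `ℚ`-algebra on generators `X_α`, `α ∈ M`, `α ≠ 0`,
realized as the monoid algebra of the free monoid, so that the monomials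
`X_{β₁}⋯X_{β_m}` are the words in the `β_i`. -/
abbrev NCF (M : Type) [AddCommMonoid M] :=
  MonoidAlgebra ℚ (FreeMonoid {a : M // a ≠ 0})

open Classical in
/-- The generator `X_α` of `NC_M` (with `X_0 = 1`). -/
noncomputable def Xel (α : M) : NCF M :=
  if h : α = 0 then 1 else MonoidAlgebra.single (FreeMonoid.of ⟨α, h⟩) 1

/-- The pairing `⟨Z(α₁,…,α_n), X_{β₁}⋯X_{β_m}⟩ = δ_{m,n} ∏ δ_{α_i,β_i}`,
extended bilinearly. -/
noncomputable def pairing (a : QS M) (v : NCF M) : ℚ :=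
  Finsupp.sum a fun w c => c * v.coeff (FreeMonoid.ofList w)

/-- The pairing with `a`, as a linear functional on `NC_M`. -/
noncomputable def pairL (a : QS M) : NCF M →ₗ[ℚ] ℚ :=
  (Finsupp.lsum ℚ fun w => a (FreeMonoid.toList w) • (LinearMap.id : ℚ →ₗ[ℚ] ℚ))
    ∘ₗ (MonoidAlgebra.coeffLinearEquiv ℚ).toLinearMap

/-- The pairing of `a ⊗ b` against `NC_M ⊗ NC_M`, `⟨a⊗b, v⊗w⟩ = ⟨a,v⟩⟨b,w⟩`. -/
noncomputable def pairT (a b : QS M) :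
    TensorProduct ℚ (NCF M) (NCF M) →ₗ[ℚ] ℚ :=
  TensorProduct.lift ((pairL a).smulRight (pairL b))

variable (S : Type) [DecidableEq S]

instance : AddZeroFree (S →₀ ℕ) where
  add_ne a b ha _ h := by
    apply ha
    ext s
    have hs := DFunLike.congr_fun h s
    simp only [Finsupp.add_apply, Finsupp.coe_zero, Pi.zero_apply] at hs ⊢
    omega

/-- The coproduct on `NC_M` for `M = ℕ^{⊕S}`: the algebra homomorphism with
`Δ(X_γ) = ∑_{α+β=γ} X_α ⊗ X_β`. -/
noncomputable def DeltaNCF :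
    NCF (S →₀ ℕ) →ₐ[ℚ] TensorProduct ℚ (NCF (S →₀ ℕ)) (NCF (S →₀ ℕ)) :=
  MonoidAlgebra.lift ℚ _ (FreeMonoid {a : S →₀ ℕ // a ≠ 0})
    (FreeMonoid.lift fun a : {a : S →₀ ℕ // a ≠ 0} =>
      ∑ p ∈ Finset.HasAntidiagonal.antidiagonal a.1, Xel p.1 ⊗ₜ[ℚ] Xel p.2)

end QSym

/-!
Write `leftDeriv p` (`∂_p`) for the adjoint of left multiplication by `X_p` under the pairing: it
deletes a leading letter `p` from a word, and `∂_0 = id`. Since `Δ` is multiplicative,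
`⟨a ⊗ b, Δ(X_β v)⟩ = ∑_{p+q=β} ⟨∂_p a ⊗ ∂_q b, Δ v⟩`, while the recursion defining the
quasi-shuffle, read at the first letter, is the Leibniz rule `∂_β (ab) = ∑_{p+q=β} ∂_p a · ∂_q b`.
Induction on the length of the monomial `v` thus reduces the identity to `v = 1`, where both sides
are the product of the constant terms of `a` and `b`.
-/

namespace QSym

open Finset.HasAntidiagonal

section Qmul

variable {M : Type} [AddCommMonoid M] [AddZeroFree M]

noncomputable def qmulₗ : QS M →ₗ[ℚ] QS M →ₗ[ℚ] QS M :=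
  Finsupp.linearCombination ℚ fun u => Finsupp.linearCombination ℚ (qsh u)

theorem qmulₗ_apply (a b : QS M) : qmulₗ a b = qmul a b := by
  simp only [qmulₗ, qmul, Finsupp.linearCombination_apply, Finsupp.sum, LinearMap.sum_apply,
    LinearMap.smul_apply, Finset.smul_sum, mul_smul]

theorem qmul_zero_left (b : QS M) : qmul 0 b = 0 := by
  simp [qmul]

theorem qmul_zero_right (a : QS M) : qmul a 0 = 0 := by
  simp [qmul]

theorem qsh_nil_left (w : Word M) : qsh [] w = Finsupp.single w 1 := by
  rw [qsh]

theorem qsh_nil_right (u : Word M) : qsh u [] = Finsupp.single u 1 := by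
  cases u <;> rw [qsh]

theorem qsh_cons_cons (a b : {x : M // x ≠ 0}) (u w : Word M) :
    qsh (a :: u) (b :: w) =
      Finsupp.mapDomain (a :: ·) (qsh u (b :: w)) + Finsupp.mapDomain (b :: ·) (qsh (a :: u) w)
        + Finsupp.mapDomain (⟨a.1 + b.1, AddZeroFree.add_ne a.1 b.1 a.2 b.2⟩ :: ·) (qsh u w) := by
  rw [qsh]

theorem qmul_single_single (u w : Word M) (r s : ℚ) :
    qmul (Finsupp.single u r) (Finsupp.single w s) = (r * s) • qsh u w := by
  simp only [← qmulₗ_apply, qmulₗ, Finsupp.linearCombination_single, LinearMap.smul_apply, mul_smul]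

theorem qmul_single_nil_left (b : QS M) : qmul (Finsupp.single [] 1) b = b := by
  have hid : qmulₗ (Finsupp.single [] 1) = (LinearMap.id : QS M →ₗ[ℚ] QS M) := by
    ext w : 2
    simp [qmulₗ_apply, qmul_single_single, qsh_nil_left]
  rw [← qmulₗ_apply, hid, LinearMap.id_apply]

theorem qmul_single_nil_right (a : QS M) : qmul a (Finsupp.single [] 1) = a := by
  have hid : qmulₗ.flip (Finsupp.single [] 1) = (LinearMap.id : QS M →ₗ[ℚ] QS M) := by
    ext u : 2
    simp [qmulₗ_apply, qmul_single_single, qsh_nil_right]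
  rw [← qmulₗ_apply, ← LinearMap.flip_apply, hid, LinearMap.id_apply]

theorem mapDomain_cons_apply_nil (c : {x : M // x ≠ 0}) (f : QS M) :
    Finsupp.mapDomain (c :: ·) f [] = 0 :=
  Finsupp.mapDomain_of_notMem_range _ _ fun ⟨_, h⟩ => List.cons_ne_nil _ _ h

theorem qsh_apply_nil (u w : Word M) :
    qsh u w [] = (Finsupp.single u 1 : QS M) [] * (Finsupp.single w 1 : QS M) [] := by
  match u, w with
  | [], w => simp [qsh_nil_left]
  | _ :: _, [] => simp [qsh_nil_right]
  | _ :: _, _ :: _ => simp [qsh_cons_cons, mapDomain_cons_apply_nil]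

theorem qmul_apply_nil (a b : QS M) : qmul a b [] = a [] * b [] := by
  have hbilin : qmulₗ.compr₂ (Finsupp.lapply []) =
      (LinearMap.mul ℚ ℚ).compl₁₂ (Finsupp.lapply (R := ℚ) (M := ℚ) ([] : Word M))
        (Finsupp.lapply []) := by
    ext u w : 4
    simp [qmulₗ_apply, qmul_single_single, qsh_apply_nil]
  simpa [qmulₗ_apply] using LinearMap.congr_fun₂ hbilin a b

end Qmul

section LeftDeriv

variable {M : Type} [AddCommMonoid M]

open Classical in
noncomputable def leftDeriv (p : M) : QS M →ₗ[ℚ] QS M :=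
  if hp : p = 0 then LinearMap.id else Finsupp.lcomapDomain (⟨p, hp⟩ :: ·) List.cons_injective

theorem leftDeriv_zero : leftDeriv (0 : M) = LinearMap.id := by
  simp [leftDeriv]

theorem leftDeriv_apply (c : {x : M // x ≠ 0}) (f : QS M) (t : Word M) :
    leftDeriv c.1 f t = f (c :: t) := by
  simp [leftDeriv, c.2]

open Classical in
theorem leftDeriv_mapDomain_cons (c : {x : M // x ≠ 0}) {p : M} (hp : p ≠ 0) (f : QS M) :
    leftDeriv p (Finsupp.mapDomain (c :: ·) f) = if c.1 = p then f else 0 := by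
  ext t
  lift p to {x : M // x ≠ 0} using hp
  rw [leftDeriv_apply]
  split_ifs with h
  · rw [Subtype.ext h, Finsupp.mapDomain_apply List.cons_injective]
  · refine Finsupp.mapDomain_of_notMem_range _ _ fun ⟨_, hs⟩ => h ?_
    exact congrArg Subtype.val (List.cons.inj hs).1

theorem leftDeriv_single_nil {p : M} (hp : p ≠ 0) (r : ℚ) :
    leftDeriv p (Finsupp.single [] r) = 0 := by
  ext t
  lift p to {x : M // x ≠ 0} using hp
  simp [leftDeriv_apply]

open Classical in
theorem leftDeriv_single_cons (c : {x : M // x ≠ 0}) (t : Word M) {p : M} (hp : p ≠ 0) (r : ℚ) :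
    leftDeriv p (Finsupp.single (c :: t) r) = if c.1 = p then Finsupp.single t r else 0 := by
  rw [← Finsupp.mapDomain_single (f := (c :: ·)), leftDeriv_mapDomain_cons c hp]

end LeftDeriv

theorem sum_antidiagonal_eq_add_add_sum_filter {M β : Type*} [AddCommMonoid M]
    [Finset.HasAntidiagonal M] [DecidableEq M] [AddCommMonoid β] {γ : M} (hγ : γ ≠ 0)
    (F : M × M → β) :
    ∑ x ∈ antidiagonal γ, F x =
      F (γ, 0) + F (0, γ) + ∑ x ∈ antidiagonal γ with x.1 ≠ 0 ∧ x.2 ≠ 0, F x := by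
  have hboundary : {x ∈ antidiagonal γ | ¬(x.1 ≠ 0 ∧ x.2 ≠ 0)} = {(γ, 0), (0, γ)} := by
    ext ⟨p, q⟩
    simp only [Finset.mem_filter, mem_antidiagonal, Finset.mem_insert, Finset.mem_singleton,
      Prod.mk.injEq, not_and_or, not_not]
    constructor
    · rintro ⟨rfl, rfl | rfl⟩ <;> simp
    · rintro (⟨rfl, rfl⟩ | ⟨rfl, rfl⟩) <;> simp
  rw [← Finset.sum_filter_add_sum_filter_not (antidiagonal γ) (fun x => x.1 ≠ 0 ∧ x.2 ≠ 0),
    hboundary, Finset.sum_pair (by simp [hγ]), add_comm]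

section Leibniz

variable {M : Type} [AddCommMonoid M] [AddZeroFree M]

theorem sum_qmul_leftDeriv_single_cons [Finset.HasAntidiagonal M] [DecidableEq M] (γ : M)
    (c d : {x : M // x ≠ 0}) (u w : Word M) :
    ∑ x ∈ antidiagonal γ with x.1 ≠ 0 ∧ x.2 ≠ 0,
        qmul (leftDeriv x.1 (Finsupp.single (c :: u) 1))
          (leftDeriv x.2 (Finsupp.single (d :: w) 1)) =
      if c.1 + d.1 = γ then qsh u w else 0 := by
  have hterm : ∀ x ∈ {x ∈ antidiagonal γ | x.1 ≠ 0 ∧ x.2 ≠ 0},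
      qmul (leftDeriv x.1 (Finsupp.single (c :: u) 1))
          (leftDeriv x.2 (Finsupp.single (d :: w) 1)) =
        if (c.1, d.1) = x then qsh u w else 0 := by
    rintro ⟨p, q⟩ hx
    simp only [Finset.mem_filter] at hx
    rw [leftDeriv_single_cons c u hx.2.1, leftDeriv_single_cons d w hx.2.2]
    by_cases hp : c.1 = p <;> by_cases hq : d.1 = q <;>
      simp [hp, hq, qmul_single_single, qmul_zero_left, qmul_zero_right]
  rw [Finset.sum_congr rfl hterm, Finset.sum_ite_eq]
  simp [c.2, d.2]

theorem leftDeriv_qsh [Finset.HasAntidiagonal M] [DecidableEq M] {γ : M} (hγ : γ ≠ 0)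
    (u w : Word M) :
    leftDeriv γ (qsh u w) = ∑ x ∈ antidiagonal γ,
      qmul (leftDeriv x.1 (Finsupp.single u 1)) (leftDeriv x.2 (Finsupp.single w 1)) := by
  rw [sum_antidiagonal_eq_add_add_sum_filter hγ]
  simp only [leftDeriv_zero, LinearMap.id_apply]
  match u, w with
  | [], w =>
    have hrest : ∀ x ∈ {x ∈ antidiagonal γ | x.1 ≠ 0 ∧ x.2 ≠ 0},
        qmul (leftDeriv x.1 (Finsupp.single [] 1)) (leftDeriv x.2 (Finsupp.single w 1)) = 0 :=
      fun x hx => by rw [leftDeriv_single_nil (Finset.mem_filter.1 hx).2.1, qmul_zero_left]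
    rw [Finset.sum_eq_zero hrest, leftDeriv_single_nil hγ, qsh_nil_left, qmul_zero_left,
      qmul_single_nil_left, zero_add, add_zero]
  | c :: u, [] =>
    have hrest : ∀ x ∈ {x ∈ antidiagonal γ | x.1 ≠ 0 ∧ x.2 ≠ 0},
        qmul (leftDeriv x.1 (Finsupp.single (c :: u) 1))
          (leftDeriv x.2 (Finsupp.single [] 1)) = 0 :=
      fun x hx => by rw [leftDeriv_single_nil (Finset.mem_filter.1 hx).2.2, qmul_zero_right]
    rw [Finset.sum_eq_zero hrest, leftDeriv_single_nil hγ, qsh_nil_right, qmul_zero_right,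
      qmul_single_nil_right, add_zero, add_zero]
  | c :: u, d :: w =>
    rw [sum_qmul_leftDeriv_single_cons, qsh_cons_cons, map_add, map_add,
      leftDeriv_mapDomain_cons _ hγ, leftDeriv_mapDomain_cons _ hγ, leftDeriv_mapDomain_cons _ hγ,
      leftDeriv_single_cons _ _ hγ, leftDeriv_single_cons _ _ hγ]
    split_ifs <;> simp [qmul_single_single, qmul_zero_left, qmul_zero_right]

theorem leftDeriv_qmul [Finset.HasAntidiagonal M] [DecidableEq M] {γ : M} (hγ : γ ≠ 0)
    (a b : QS M) :
    leftDeriv γ (qmul a b) = ∑ x ∈ antidiagonal γ, qmul (leftDeriv x.1 a) (leftDeriv x.2 b) := by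
  have hbilin : qmulₗ.compr₂ (leftDeriv γ) =
      ∑ x ∈ antidiagonal γ, qmulₗ.compl₁₂ (leftDeriv x.1) (leftDeriv x.2) := by
    ext u w : 4
    simp [qmulₗ_apply, qmul_single_single, leftDeriv_qsh hγ]
  simpa [qmulₗ_apply] using LinearMap.congr_fun₂ hbilin a b

end Leibniz

section Pairing

variable {M : Type} [AddCommMonoid M]

theorem pairL_single (a : QS M) (g : FreeMonoid {x : M // x ≠ 0}) (r : ℚ) :
    pairL a (MonoidAlgebra.single g r) = a g.toList * r := by
  simp [pairL]

theorem pairing_eq_pairL (a : QS M) (v : NCF M) : pairing a v = pairL a v := by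
  induction v using MonoidAlgebra.induction_linear with
  | zero => simp [pairing]
  | add x y hx hy => simp [pairing, ← hx, ← hy, Finsupp.sum_add, mul_add]
  | single g r =>
    rw [pairL_single, pairing, Finsupp.sum_eq_single g.toList]
    · simp
    · intro w _ hw
      rw [MonoidAlgebra.coeff_single, Finsupp.single_eq_of_ne, mul_zero]
      rintro rfl
      exact hw (FreeMonoid.toList_ofList w).symm
    · simp

theorem Xel_zero : Xel (0 : M) = 1 := by
  simp [Xel]

theorem Xel_coe (c : {x : M // x ≠ 0}) : Xel c.1 = MonoidAlgebra.single (FreeMonoid.of c) 1 := by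
  simp [Xel, c.2]

theorem pairL_Xel_mul (a : QS M) (p : M) (x : NCF M) :
    pairL a (Xel p * x) = pairL (leftDeriv p a) x := by
  by_cases hp : p = 0
  · rw [hp, Xel_zero, one_mul, leftDeriv_zero, LinearMap.id_apply]
  lift p to {x : M // x ≠ 0} using hp
  induction x using MonoidAlgebra.induction_linear with
  | zero => simp
  | add x y hx hy => rw [mul_add, map_add, map_add, hx, hy]
  | single g r =>
    rw [Xel_coe, MonoidAlgebra.single_mul_single, one_mul, pairL_single, pairL_single,
      FreeMonoid.toList_of_mul, leftDeriv_apply]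

theorem pairT_tmul (a b : QS M) (x y : NCF M) :
    pairT a b (x ⊗ₜ[ℚ] y) = pairL a x * pairL b y := by
  simp [pairT]

theorem pairT_Xel_tmul_mul (a b : QS M) (p q : M) (T : TensorProduct ℚ (NCF M) (NCF M)) :
    pairT a b ((Xel p ⊗ₜ[ℚ] Xel q) * T) = pairT (leftDeriv p a) (leftDeriv q b) T := by
  induction T using TensorProduct.induction_on with
  | zero => rw [mul_zero, map_zero, map_zero]
  | tmul x y =>
    rw [Algebra.TensorProduct.tmul_mul_tmul, pairT_tmul, pairT_tmul, pairL_Xel_mul, pairL_Xel_mul]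
  | add x y hx hy => rw [mul_add, map_add, map_add, hx, hy]

end Pairing

variable (S : Type) [DecidableEq S]

theorem DeltaNCF_single_of (β : {x : S →₀ ℕ // x ≠ 0}) :
    DeltaNCF S (MonoidAlgebra.single (FreeMonoid.of β) 1) =
      ∑ x ∈ antidiagonal β.1, Xel x.1 ⊗ₜ[ℚ] Xel x.2 := by
  rw [DeltaNCF, MonoidAlgebra.lift_single, one_smul, FreeMonoid.lift_eval_of]

theorem pairT_DeltaNCF_single (g : FreeMonoid {x : S →₀ ℕ // x ≠ 0}) (a b : QS (S →₀ ℕ)) :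
    pairT a b (DeltaNCF S (MonoidAlgebra.single g 1)) = qmul a b g.toList := by
  induction g using FreeMonoid.inductionOn' generalizing a b with
  | one =>
    rw [← MonoidAlgebra.one_def, map_one, Algebra.TensorProduct.one_def, pairT_tmul,
      MonoidAlgebra.one_def, pairL_single, pairL_single, FreeMonoid.toList_one, qmul_apply_nil,
      mul_one, mul_one]
  | of_mul β g ih =>
    calc pairT a b (DeltaNCF S (MonoidAlgebra.single (FreeMonoid.of β * g) 1))
        = ∑ x ∈ antidiagonal β.1,
            pairT (leftDeriv x.1 a) (leftDeriv x.2 b) (DeltaNCF S (MonoidAlgebra.single g 1)) := by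
          rw [← one_mul (1 : ℚ), ← MonoidAlgebra.single_mul_single, map_mul, DeltaNCF_single_of,
            Finset.sum_mul, map_sum]
          simp only [pairT_Xel_tmul_mul, one_mul]
      _ = ∑ x ∈ antidiagonal β.1, qmul (leftDeriv x.1 a) (leftDeriv x.2 b) g.toList := by
          simp only [ih]
      _ = leftDeriv β.1 (qmul a b) g.toList := by
          rw [leftDeriv_qmul β.2, Finsupp.finsetSum_apply]
      _ = qmul a b (FreeMonoid.of β * g).toList := by
          rw [leftDeriv_apply, FreeMonoid.toList_of_mul]

/-- The pairing between `QSym_M` and `NC_M` (for `M = ℕ^{⊕S}`)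
satisfies `⟨a ⊗ b, Δ(v)⟩ = ⟨ab, v⟩`, where `ab` is the quasi-shuffle product. -/
theorem pairing_mul_comul (a b : QS (S →₀ ℕ)) (v : NCF (S →₀ ℕ)) :
    pairT a b (DeltaNCF S v) = pairing (qmul a b) v := by
  have hmaps : pairT a b ∘ₗ (DeltaNCF S).toLinearMap = pairL (qmul a b) := by
    ext g
    simpa [pairL_single] using pairT_DeltaNCF_single S g a b
  rw [pairing_eq_pairL, ← hmaps, LinearMap.comp_apply, AlgHom.toLinearMap_apply]

end QSym
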